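/- A Hermitian quaternion matrix G ∈ ℍ^{n×n} is quaternion-PSD (Re(v* G v) ≥ 0 for all v ∈ ℍ^n) if and only if there exists a quaternion matrix C ∈ ℍ^{n×n} such that G = C* C. -/

import Mathlib

open Matrix

local notation "ℍ" => Quaternion ℝ

/-!
Cholesky-type induction on `n`. For Hermitian `G` with real corner `a = G₀₀`, first row tail `b`
and lower-right block `D`, put `S = D - a⁻¹ b* b`. Substituting `v = (-a⁻¹ (b ⬝ w), w)` turns the
form of `G` into that of `S`, so `S` is again Hermitian PSD and by induction `S = C₁* C₁`; then
`G = C* C` for `C = [[√a, b/√a], [0, C₁]]`. If `a = 0`, positivity forces `b = 0`, and the same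
formulas hold with `0⁻¹ = 0`. Conversely, `Re (v* C* C v) = ‖C v‖² ≥ 0`.
-/

theorem Quaternion.re_sum {α R : Type*} [CommRing R] (s : Finset α) (f : α → Quaternion R) :
    (∑ i ∈ s, f i).re = ∑ i ∈ s, (f i).re :=
  map_sum (QuaternionAlgebra.reₗ _ _ _) f s

namespace Matrix

variable {ι m R : Type*}

theorem IsHermitian.apply_self_eq_re {G : Matrix ι ι ℍ} (hG : G.IsHermitian) (i : ι) :
    G i i = ((G i i).re : ℍ) :=
  Quaternion.star_eq_self.mp (hG.apply i i)

variable [Fintype ι]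

theorem sum_sum_star_mul_mul_eq_star_dotProduct_mulVec [NonUnitalSemiring R] [Star R]
    (G : Matrix ι ι R) (v : ι → R) :
    ∑ k, ∑ l, star (v k) * G k l * v l = star v ⬝ᵥ G *ᵥ v := by
  simp only [dotProduct, mulVec, Finset.mul_sum, Pi.star_apply, mul_assoc]

theorem star_dotProduct_conjTranspose_mul_self_mulVec [Fintype m] [Semiring R] [StarRing R]
    (C : Matrix m ι R) (v : ι → R) :
    star v ⬝ᵥ (Cᴴ * C) *ᵥ v = star (C *ᵥ v) ⬝ᵥ C *ᵥ v := by
  rw [← mulVec_mulVec, dotProduct_mulVec, star_mulVec]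

theorem re_star_dotProduct_self_nonneg (x : ι → ℍ) : 0 ≤ (star x ⬝ᵥ x).re := by
  simp only [dotProduct, Pi.star_apply, Quaternion.star_mul_self]
  rw [Quaternion.re_sum]
  exact Finset.sum_nonneg fun i _ => Quaternion.normSq_nonneg

def QuatPosSemidef (G : Matrix ι ι ℍ) : Prop :=
  ∀ v : ι → ℍ, 0 ≤ (star v ⬝ᵥ G *ᵥ v).re

theorem quatPosSemidef_conjTranspose_mul_self [Fintype m] (C : Matrix m ι ℍ) :
    (Cᴴ * C).QuatPosSemidef := fun v => by
  rw [star_dotProduct_conjTranspose_mul_self_mulVec]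
  exact re_star_dotProduct_self_nonneg _

section Fin

variable {n : ℕ}

theorem IsHermitian.star_cons_dotProduct_mulVec_cons [Semiring R] [StarRing R]
    {G : Matrix (Fin (n + 1)) (Fin (n + 1)) R} (hG : G.IsHermitian) (q : R) (w : Fin n → R) :
    star (Fin.cons q w : Fin (n + 1) → R) ⬝ᵥ G *ᵥ Fin.cons q w =
      star q * G 0 0 * q + star q * (Fin.tail (G 0) ⬝ᵥ w) + star (Fin.tail (G 0) ⬝ᵥ w) * q +
        star w ⬝ᵥ G.submatrix Fin.succ Fin.succ *ᵥ w := by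
  simp only [dotProduct, mulVec, Fin.sum_univ_succ, Pi.star_apply, Fin.cons_zero, Fin.cons_succ,
    Fin.tail, star_sum, star_mul, mul_add, Finset.mul_sum, Finset.sum_mul,
    submatrix_apply, mul_assoc, Finset.sum_add_distrib, hG.apply _ 0]
  abel

theorem star_single_one_dotProduct_mulVec_single_one [DecidableEq ι] [Semiring R] [StarRing R]
    (G : Matrix ι ι R) (i : ι) : star (Pi.single i 1 : ι → R) ⬝ᵥ G *ᵥ Pi.single i 1 = G i i := by
  simp

theorem QuatPosSemidef.re_apply_self_nonneg {G : Matrix ι ι ℍ} (hP : G.QuatPosSemidef) (i : ι) :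
    0 ≤ (G i i).re := by
  classical
  simpa only [star_single_one_dotProduct_mulVec_single_one] using hP (Pi.single i 1)

theorem QuatPosSemidef.tail_row_zero_eq_zero {G : Matrix (Fin (n + 1)) (Fin (n + 1)) ℍ}
    (hG : G.IsHermitian) (hP : G.QuatPosSemidef) (h0 : G 0 0 = 0) : Fin.tail (G 0) = 0 := by
  funext j
  -- Along `(-x b, e_j)`, with `b = G 0 j.succ`, the form is `Re G_jj - 2 x |b|²`.
  have key : ∀ x : ℝ, 2 * x * Quaternion.normSq (Fin.tail (G 0) j) ≤ (G j.succ j.succ).re :=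
    fun x => by
      have h := hP (Fin.cons (-(x • Fin.tail (G 0) j)) (Pi.single j 1))
      rw [hG.star_cons_dotProduct_mulVec_cons, h0] at h
      simp only [mul_zero, zero_mul, Quaternion.re_zero, dotProduct_single_one,
        star_single_one_dotProduct_mulVec_single_one, star_neg, Quaternion.star_smul, neg_mul,
        mul_neg, smul_mul_assoc, mul_smul_comm, Quaternion.star_mul_self,
        Quaternion.re_add, Quaternion.re_neg, Quaternion.re_smul, Quaternion.re_coe,
        submatrix_apply, smul_eq_mul] at h
      linarith
  refine Quaternion.normSq_le_zero.mp (not_lt.mp fun hN => ?_)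
  have h := key (((G j.succ j.succ).re + 1) / (2 * Quaternion.normSq (Fin.tail (G 0) j)))
  field_simp at h
  linarith

/-- For `(G 0 0).re = 0` the junk value `0⁻¹ = 0` makes this the lower-right block of `G`. -/
noncomputable def schurComplement (G : Matrix (Fin (n + 1)) (Fin (n + 1)) ℍ) :
    Matrix (Fin n) (Fin n) ℍ :=
  G.submatrix Fin.succ Fin.succ - (G 0 0).re⁻¹ • vecMulVec (star (Fin.tail (G 0))) (Fin.tail (G 0))

theorem IsHermitian.schurComplement {G : Matrix (Fin (n + 1)) (Fin (n + 1)) ℍ}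
    (hG : G.IsHermitian) : G.schurComplement.IsHermitian := by
  refine Matrix.ext fun i j => ?_
  simp only [Matrix.schurComplement, conjTranspose_apply, sub_apply, smul_apply, vecMulVec_apply,
    submatrix_apply, star_sub, Quaternion.star_smul, star_mul, star_star, Pi.star_apply, hG.apply]

theorem IsHermitian.star_cons_dotProduct_mulVec_cons_eq_schurComplement
    {G : Matrix (Fin (n + 1)) (Fin (n + 1)) ℍ} (hG : G.IsHermitian) (w : Fin n → ℍ) :
    let v : Fin (n + 1) → ℍ := Fin.cons (-((G 0 0).re⁻¹ • (Fin.tail (G 0) ⬝ᵥ w))) w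
    star v ⬝ᵥ G *ᵥ v = star w ⬝ᵥ G.schurComplement *ᵥ w := by
  intro v
  rw [hG.star_cons_dotProduct_mulVec_cons, Matrix.schurComplement, sub_mulVec,
    dotProduct_sub, smul_mulVec, dotProduct_smul, vecMulVec_mulVec, dotProduct_smul,
    MulOpposite.smul_eq_mul_unop, MulOpposite.unop_op, star_dotProduct_star]
  rw [hG.apply_self_eq_re 0, Quaternion.re_coe]
  generalize (G 0 0).re = a
  generalize Fin.tail (G 0) ⬝ᵥ w = t
  simp only [star_neg, Quaternion.star_smul, neg_mul, mul_neg, smul_neg, neg_neg, smul_mul_assoc,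
    mul_smul_comm, Quaternion.mul_coe_eq_smul, smul_smul]
  have ha : a⁻¹ * (a⁻¹ * a) = a⁻¹ := by
    rcases eq_or_ne a 0 with rfl | ha
    · simp
    · field_simp
  rw [ha]
  abel

theorem QuatPosSemidef.schurComplement {G : Matrix (Fin (n + 1)) (Fin (n + 1)) ℍ}
    (hG : G.IsHermitian) (hP : G.QuatPosSemidef) : G.schurComplement.QuatPosSemidef := fun w => by
  rw [← hG.star_cons_dotProduct_mulVec_cons_eq_schurComplement]
  exact hP _

theorem IsHermitian.exists_eq_conjTranspose_mul_of_schurComplement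
    {G : Matrix (Fin (n + 1)) (Fin (n + 1)) ℍ} (hG : G.IsHermitian) (ha : 0 ≤ (G 0 0).re)
    (hb : G 0 0 = 0 → Fin.tail (G 0) = 0) {C₁ : Matrix (Fin n) (Fin n) ℍ}
    (hC₁ : G.schurComplement = C₁ᴴ * C₁) :
    ∃ C : Matrix (Fin (n + 1)) (Fin (n + 1)) ℍ, G = Cᴴ * C := by
  have hG0 := hG.apply_self_eq_re 0
  have hsqrt : ∀ j, (√(G 0 0).re * (√(G 0 0).re)⁻¹) • Fin.tail (G 0) j = Fin.tail (G 0) j := by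
    intro j
    rcases ha.eq_or_lt with ha0 | ha0
    · rw [hb (by rw [hG0, ← ha0, Quaternion.coe_zero])]
      simp
    · rw [mul_inv_cancel₀ (Real.sqrt_pos.mpr ha0).ne', one_smul]
  refine ⟨of (Fin.cons (Fin.cons (√(G 0 0).re : ℍ) ((√(G 0 0).re)⁻¹ • Fin.tail (G 0)))
    fun i => Fin.cons 0 (C₁ i)), Matrix.ext fun k l => ?_⟩
  rw [mul_apply, Fin.sum_univ_succ]
  cases k using Fin.cases with
  | zero =>
    cases l using Fin.cases with
    | zero =>
      simp only [of_apply, conjTranspose_apply, Fin.cons_zero, Fin.cons_succ, Quaternion.star_coe,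
        star_zero, zero_mul, Finset.sum_const_zero, add_zero, ← Quaternion.coe_mul,
        Real.mul_self_sqrt ha]
      exact hG0
    | succ l =>
      simp only [of_apply, conjTranspose_apply, Fin.cons_zero, Fin.cons_succ, Quaternion.star_coe,
        star_zero, zero_mul, Finset.sum_const_zero, add_zero, Pi.smul_apply,
        Quaternion.coe_mul_eq_smul, smul_smul, hsqrt]
      rfl
  | succ k =>
    cases l using Fin.cases with
    | zero =>
      simp only [of_apply, conjTranspose_apply, Fin.cons_zero, Fin.cons_succ, mul_zero,
        Finset.sum_const_zero, add_zero, Pi.smul_apply, Quaternion.star_smul, smul_mul_assoc,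
        Quaternion.mul_coe_eq_smul, smul_smul, mul_comm _ √(G 0 0).re]
      rw [← Quaternion.star_smul, hsqrt]
      exact (hG.apply k.succ 0).symm
    | succ l =>
      simp only [of_apply, conjTranspose_apply, Fin.cons_zero, Fin.cons_succ, Pi.smul_apply,
        Quaternion.star_smul, smul_mul_assoc, mul_smul_comm, smul_smul, ← mul_inv,
        Real.mul_self_sqrt ha]
      rw [show ∑ i, star (C₁ i k) * C₁ i l = (C₁ᴴ * C₁) k l from rfl, ← hC₁]
      simp only [Matrix.schurComplement, sub_apply, smul_apply, submatrix_apply, vecMulVec_apply,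
        Pi.star_apply]
      abel

theorem QuatPosSemidef.exists_eq_conjTranspose_mul :
    ∀ {n : ℕ} {G : Matrix (Fin n) (Fin n) ℍ}, G.IsHermitian → G.QuatPosSemidef →
      ∃ C : Matrix (Fin n) (Fin n) ℍ, G = Cᴴ * C
  | 0, _, _, _ => ⟨0, Subsingleton.elim _ _⟩
  | _ + 1, _, hG, hP =>
    have ⟨_, hC₁⟩ := exists_eq_conjTranspose_mul hG.schurComplement (hP.schurComplement hG)
    hG.exists_eq_conjTranspose_mul_of_schurComplement (hP.re_apply_self_nonneg 0)
      (hP.tail_row_zero_eq_zero hG) hC₁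

end Fin

end Matrix

/-- Gram-matrix characterization: a Hermitian quaternion matrix `G` is
quaternion-PSD iff `G = C* C` for some quaternion matrix `C`. -/
theorem quaternion_psd_iff_gram {n : ℕ}
    (G : Matrix (Fin n) (Fin n) (Quaternion ℝ)) (hG : G = Gᴴ) :
    (∀ v : Fin n → Quaternion ℝ, 0 ≤ (∑ k, ∑ l, star (v k) * G k l * v l).re) ↔
      ∃ C : Matrix (Fin n) (Fin n) (Quaternion ℝ), G = Cᴴ * C := by
  simp_rw [sum_sum_star_mul_mul_eq_star_dotProduct_mulVec]
  refine ⟨fun hP => QuatPosSemidef.exists_eq_conjTranspose_mul hG.symm hP, ?_⟩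
  rintro ⟨C, rfl⟩
  exact quatPosSemidef_conjTranspose_mul_self C
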